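/- arXiv:1211.6318 — 2 statements merged into one kernel-verified Lean document; each statement's English description precedes it below -/
import Mathlib

section
/- Let n ≥ 3 and let Λ ⊆ ℂ be an n-cyclotomic Delone set. Then for every set U ⊆ S¹ of pairwise nonparallel Λ-directions with card(U) < 4, the convex subsets of Λ are NOT determined by the X-rays in the directions of U; i.e., there exist two distinct convex subsets of Λ having the same X-rays in all directions of U. -/
open Complex Set

noncomputable section

/-- `zeta n = e^{2πi/n}`, a primitive `n`-th root of unity in `ℂ`. -/
def zeta (n : ℕ) : ℂ := Complex.exp (2 * Real.pi * Complex.I / n)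

/-- The `n`-th cyclotomic field `ℚ(ζ_n)`, realised as the smallest subfield of `ℂ`
containing `zeta n` (as a subfield of `ℂ` it automatically contains `ℚ`). -/
def cycField (n : ℕ) : Subfield ℂ := Subfield.closure {zeta n}

/-- The difference set `Λ - Λ = {v - w | v, w ∈ Λ}`. -/
def diffSet (Λ : Set ℂ) : Set ℂ := {z | ∃ v ∈ Λ, ∃ w ∈ Λ, z = v - w}

/-- `K_Λ`: the smallest subfield of `ℂ` containing `Λ - Λ` together with the complex
conjugates of all its elements (it automatically contains `ℚ`). -/
def KField (Λ : Set ℂ) : Subfield ℂ :=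
  Subfield.closure (diffSet Λ ∪ (starRingEnd ℂ) '' diffSet Λ)

/-- A Delone set: uniformly discrete and relatively dense. -/
def IsDelone (Λ : Set ℂ) : Prop :=
  (∃ r : ℝ, 0 < r ∧ ∀ x ∈ Λ, ∀ y ∈ Λ, x ≠ y → r ≤ dist x y) ∧
  (∃ R : ℝ, 0 < R ∧ ∀ z : ℂ, ∃ x ∈ Λ, dist z x ≤ R)

/-- `Λ` is an `n`-cyclotomic Delone set: it is a Delone set, `K_Λ ⊆ ℚ(ζ_n)` (n-Cyc), and
every finite subset of `K_Λ` can be mapped into `Λ` by a homothety `z ↦ l·z + t`,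
`l ∈ ℝ`, `l > 0`, `t ∈ ℂ` (Hom). -/
def IsCycDelone (n : ℕ) (Λ : Set ℂ) : Prop :=
  IsDelone Λ ∧
  (KField Λ : Set ℂ) ⊆ (cycField n : Set ℂ) ∧
  ∀ F : Finset ℂ, (F : Set ℂ) ⊆ (KField Λ : Set ℂ) →
    ∃ (l : ℝ) (t : ℂ), 0 < l ∧ ∀ z ∈ F, (l : ℂ) * z + t ∈ Λ

/-- `v` is parallel to `u`, i.e. a real multiple of `u`. -/
def Par (u v : ℂ) : Prop := ∃ r : ℝ, v = (r : ℂ) * u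

/-- `u` is a `Λ`-direction: a unit vector parallel to a nonzero element of `Λ - Λ`. -/
def IsDir (Λ : Set ℂ) (u : ℂ) : Prop :=
  ‖u‖ = 1 ∧ ∃ z ∈ diffSet Λ, z ≠ 0 ∧ Par u z

/-- The directions in `U` are pairwise nonparallel. -/
def PwNonPar (U : Set ℂ) : Prop := ∀ u ∈ U, ∀ v ∈ U, u ≠ v → ¬ Par u v

/-- The line through `z` in direction `u`. -/
def lineDir (u z : ℂ) : Set ℂ := {w | ∃ t : ℝ, w = z + (t : ℂ) * u}

/-- `F₁` and `F₂` have the same X-ray in direction `u`: every line in direction `u`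
contains the same number of points of `F₁` as of `F₂`. -/
def SameXRay (F₁ F₂ : Set ℂ) (u : ℂ) : Prop :=
  ∀ z : ℂ, Nat.card ↥(F₁ ∩ lineDir u z) = Nat.card ↥(F₂ ∩ lineDir u z)

/-- A convex subset of `Λ`: a bounded `C ⊆ Λ` with `C = conv(C) ∩ Λ`. -/
def IsConvexSubset (Λ C : Set ℂ) : Prop :=
  C ⊆ Λ ∧ Bornology.IsBounded C ∧ C = convexHull ℝ C ∩ Λ

/-- The convex subsets of `Λ` are determined by the X-rays in the directions of `U`:
distinct convex subsets never have the same X-rays in all directions of `U`. -/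
def Determined (Λ : Set ℂ) (U : Set ℂ) : Prop :=
  ∀ C₁ C₂ : Set ℂ, IsConvexSubset Λ C₁ → IsConvexSubset Λ C₂ →
    (∀ u ∈ U, SameXRay C₁ C₂ u) → C₁ = C₂

/-- A `U`-polygon, described by its vertex set `V`: a nondegenerate convex polygon
(the vertices are not collinear and each element of `V` is a genuine vertex, i.e. not in
the convex hull of the others) such that for every vertex `v` and every `u ∈ U`, the line
through `v` in direction `u` passes through another vertex `v'`. -/
def IsUPolygon (U : Set ℂ) (V : Finset ℂ) : Prop :=
  3 ≤ V.card ∧ ¬ Collinear ℝ (V : Set ℂ) ∧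
  (∀ v ∈ V, v ∉ convexHull ℝ ((V.erase v : Finset ℂ) : Set ℂ)) ∧
  ∀ v ∈ V, ∀ u ∈ U, ∃ v' ∈ V, v' ≠ v ∧ v' ∈ lineDir u v

/-- A `U`-polygon in `Λ`: a `U`-polygon all of whose vertices lie in `Λ`. -/
def IsUPolygonIn (U Λ : Set ℂ) (V : Finset ℂ) : Prop :=
  IsUPolygon U V ∧ (V : Set ℂ) ⊆ Λ

/-- The determinant of the two plane vectors `z`, `w`. -/
def det2 (z w : ℂ) : ℝ := z.re * w.im - z.im * w.re

/-- The cross ratio `⟨sl z₁, sl z₂, sl z₃, sl z₄⟩ = (t₃-t₁)(t₄-t₂)/((t₃-t₂)(t₄-t₁))` of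
the slopes `tᵢ = sl zᵢ = Im zᵢ / Re zᵢ ∈ ℝ ∪ {∞}` of four pairwise nonparallel nonzero
vectors, computed in homogeneous coordinates; this incorporates the usual conventions
when one of the slopes equals `∞`. -/
def crossRatioSl (z₁ z₂ z₃ z₄ : ℂ) : ℝ :=
  (det2 z₁ z₃ * det2 z₂ z₄) / (det2 z₂ z₃ * det2 z₁ z₄)

/-- The angle in `[0, π)` that the line spanned by a direction `u` makes with the
positive real axis. -/
def dirAngle (u : ℂ) : ℝ :=
  if Complex.arg u < 0 then Complex.arg u + Real.pi
  else if Complex.arg u = Real.pi then 0 else Complex.arg u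

/-- `x ∈ ℝ` can be written in the form
`(1-ζ_N^{k₁})(1-ζ_N^{k₂})/((1-ζ_N^{k₃})(1-ζ_N^{k₄}))` where `N = lcm(2n,12)` and
`(k₁,k₂,k₃,k₄) ∈ ℕ⁴` (positive) with `k₃ < k₁ ≤ k₂ < k₄ ≤ N-1` and `k₁+k₂ = k₃+k₄`. -/
def CrossRatioForm (n : ℕ) (x : ℝ) : Prop :=
  ∃ k₁ k₂ k₃ k₄ : ℕ, 1 ≤ k₃ ∧ k₃ < k₁ ∧ k₁ ≤ k₂ ∧ k₂ < k₄ ∧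
    k₄ ≤ Nat.lcm (2 * n) 12 - 1 ∧ k₁ + k₂ = k₃ + k₄ ∧
    (x : ℂ) = (1 - zeta (Nat.lcm (2 * n) 12) ^ k₁) * (1 - zeta (Nat.lcm (2 * n) 12) ^ k₂) /
      ((1 - zeta (Nat.lcm (2 * n) 12) ^ k₃) * (1 - zeta (Nat.lcm (2 * n) 12) ^ k₄))

lemma det2_add_left (z w v : ℂ) : det2 (z + w) v = det2 z v + det2 w v := by simp [det2]; ring
lemma det2_add_right (z w v : ℂ) : det2 z (w + v) = det2 z w + det2 z v := by simp [det2]; ring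
lemma det2_sub_left (z w v : ℂ) : det2 (z - w) v = det2 z v - det2 w v := by simp [det2]; ring
lemma det2_sub_right (z w v : ℂ) : det2 z (w - v) = det2 z w - det2 z v := by simp [det2]; ring
lemma det2_neg_left (z v : ℂ) : det2 (-z) v = - det2 z v := by simp [det2]; ring
lemma det2_neg_right (z v : ℂ) : det2 z (-v) = - det2 z v := by simp [det2]; ring
lemma det2_self (z : ℂ) : det2 z z = 0 := by simp [det2]; ring
lemma det2_comm (z w : ℂ) : det2 w z = - det2 z w := by simp [det2]; ring
lemma det2_zero_left (z : ℂ) : det2 0 z = 0 := by simp [det2]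
lemma det2_zero_right (z : ℂ) : det2 z 0 = 0 := by simp [det2]
lemma det2_smul_left (r : ℝ) (z w : ℂ) : det2 ((r:ℂ) * z) w = r * det2 z w := by
  simp [det2, Complex.mul_re, Complex.mul_im]; ring
lemma det2_smul_right (r : ℝ) (z w : ℂ) : det2 z ((r:ℂ) * w) = r * det2 z w := by
  simp [det2, Complex.mul_re, Complex.mul_im]; ring
lemma ne_zero_left_of_det2 {z w : ℂ} (h : det2 z w ≠ 0) : z ≠ 0 := by
  rintro rfl; exact h (det2_zero_left w)
lemma ne_zero_right_of_det2 {z w : ℂ} (h : det2 z w ≠ 0) : w ≠ 0 := by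
  rintro rfl; exact h (det2_zero_right z)
lemma par_of_det2 {z w : ℂ} (h : det2 z w = 0) (hz : z ≠ 0) : ∃ r : ℝ, w = (r:ℂ) * z := by
  have hz' : z.re ≠ 0 ∨ z.im ≠ 0 := by
    by_contra hc; push_neg at hc; exact hz (Complex.ext hc.1 hc.2)
  simp only [det2] at h
  rcases hz' with h1 | h1
  · refine ⟨w.re / z.re, ?_⟩
    apply Complex.ext <;> simp [Complex.mul_re, Complex.mul_im] <;> field_simp <;> nlinarith [h]
  · refine ⟨w.im / z.im, ?_⟩
    apply Complex.ext <;> simp [Complex.mul_re, Complex.mul_im] <;> field_simp <;> nlinarith [h]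

def lfun (e e' : ℂ) : ℂ →ₗ[ℝ] ℝ where
  toFun x := det2 e e' * (det2 e' x - det2 e x)
  map_add' x y := by simp [det2]; ring
  map_smul' r x := by simp [det2, Complex.smul_re, Complex.smul_im, smul_eq_mul]; ring

lemma lfun_lt {e e' v p : ℂ} (h : det2 e e' * (det2 e' (v - p) - det2 e (v - p)) < 0) :
    lfun e e' v < lfun e e' p := by
  have h2 : lfun e e' v - lfun e e' p = lfun e e' (v - p) := (map_sub (lfun e e') v p).symm
  have h3 : lfun e e' (v - p) = det2 e e' * (det2 e' (v - p) - det2 e (v - p)) := rfl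
  linarith [h2, h3.symm ▸ h]

lemma exposed {V : Finset ℂ} {p : ℂ} (f : ℂ →ₗ[ℝ] ℝ)
    (h : ∀ v ∈ V, v ≠ p → f v < f p) :
    ∀ x ∈ convexHull ℝ (V : Set ℂ), x ≠ p → f x < f p := by
  intro x hx hxp
  rw [Finset.convexHull_eq] at hx
  obtain ⟨w, hw0, hw1, hxc⟩ := hx
  rw [Finset.centerMass_eq_of_sum_1 _ _ hw1] at hxc
  have hq : ∃ q ∈ V, q ≠ p ∧ 0 < w q := by
    by_contra hc; push_neg at hc
    have hwz : ∀ y ∈ V, y ≠ p → w y = 0 := fun y hy hyp => le_antisymm (hc y hy hyp) (hw0 y hy)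
    by_cases hpV : p ∈ V
    · have hwp : w p = 1 := by
        rw [← hw1, Finset.sum_eq_single p (fun y hy hyp => hwz y hy hyp) (fun h => absurd hpV h)]
      have : x = p := by
        rw [← hxc, Finset.sum_eq_single p (fun y hy hyp => by rw [hwz y hy hyp, zero_smul])
          (fun h => absurd hpV h), hwp]; simp
      exact hxp this
    · have : (1:ℝ) = 0 := by
        rw [← hw1]; exact Finset.sum_eq_zero (fun y hy => hwz y hy (fun h => hpV (h ▸ hy)))
      norm_num at this
  obtain ⟨q, hqV, hqp, hq0⟩ := hq
  have key : f x = ∑ y ∈ V, w y * f y := by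
    rw [← hxc, map_sum]; simp only [id_eq, map_smul, smul_eq_mul]
  have hlt : ∑ y ∈ V, w y * f y < ∑ y ∈ V, w y * f p := by
    apply Finset.sum_lt_sum
    · intro i hi; by_cases hip : i = p
      · subst hip; exact le_refl _
      · exact mul_le_mul_of_nonneg_left (le_of_lt (h i hi hip)) (hw0 i hi)
    · exact ⟨q, hqV, mul_lt_mul_of_pos_left (h q hqV hqp) hq0⟩
  have : ∑ y ∈ V, w y * f p = f p := by rw [← Finset.sum_mul, hw1, one_mul]
  linarith [key ▸ hlt, this]

lemma convexSub (Λ : Set ℂ) (V : Finset ℂ) (hVΛ : (V : Set ℂ) ⊆ Λ) (A : Set ℂ)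
    (hA : ∀ p ∈ A, ∃ f : ℂ →ₗ[ℝ] ℝ, ∀ v ∈ V, v ≠ p → f v < f p) :
    IsConvexSubset Λ ((convexHull ℝ (V : Set ℂ) ∩ Λ) \ A) := by
  set C := convexHull ℝ (V : Set ℂ) ∩ Λ with hC
  refine ⟨fun x hx => hx.1.2, ?_, ?_⟩
  · exact (V.finite_toSet.isCompact_convexHull (𝕜 := ℝ)).isBounded.subset
      (fun x hx => hx.1.1)
  · apply Subset.antisymm
    · intro x hx; exact ⟨subset_convexHull ℝ _ hx, hx.1.2⟩
    · rintro x ⟨hxc, hxΛ⟩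
      have hxV : x ∈ convexHull ℝ (V : Set ℂ) :=
        convexHull_min (fun y hy => hy.1.1) (convex_convexHull ℝ _) hxc
      refine ⟨⟨hxV, hxΛ⟩, fun hxA => ?_⟩
      obtain ⟨f, hf⟩ := hA x hxA
      have hsub : (C \ A : Set ℂ) ⊆ {y | f y < f x} := fun y hy =>
        exposed f hf y hy.1.1 (fun h => hy.2 (h ▸ hxA))
      have := convexHull_min hsub (convex_halfSpace_lt f.isLinear _) hxc
      exact lt_irrefl _ (show f x < f x from this)

lemma xray (C A B : Set ℂ) (u : ℂ) (ι : ℂ → ℂ) (hinv : Function.Involutive ι)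
    (hline : ∀ x, ∃ r : ℝ, ι x = x + (r:ℂ) * u) (hC : ∀ x ∈ C, ι x ∈ C)
    (hA : ι '' A = B) : SameXRay (C \ A) (C \ B) u := by
  intro z
  have hinj := hinv.injective
  have hl : ι '' lineDir u z = lineDir u z := by
    apply Subset.antisymm
    · rintro _ ⟨x, ⟨s, rfl⟩, rfl⟩
      obtain ⟨r, hr⟩ := hline (z + (s:ℂ) * u)
      exact ⟨s + r, by rw [hr]; push_cast; ring⟩
    · rintro x ⟨s, rfl⟩
      obtain ⟨r, hr⟩ := hline (z + (s:ℂ) * u)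
      exact ⟨ι (z + (s:ℂ)*u), ⟨s + r, by rw [hr]; push_cast; ring⟩, hinv _⟩
  have hCC : ι '' C = C := by
    apply Subset.antisymm
    · rintro _ ⟨x, hx, rfl⟩; exact hC x hx
    · intro x hx; exact ⟨ι x, hC x hx, hinv x⟩
  calc Nat.card ↥((C \ A) ∩ lineDir u z)
      = Nat.card ↥(ι '' ((C \ A) ∩ lineDir u z)) := by
        rw [Nat.card_coe_set_eq, Nat.card_coe_set_eq, Set.ncard_image_of_injective _ hinj]
    _ = Nat.card ↥((C \ B) ∩ lineDir u z) := by
        rw [Set.image_inter hinj, Set.image_diff hinj, hCC, hA, hl]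
def sw1 (a b : ℂ) (x : ℂ) : ℂ := if x = a then b else if x = b then a else x
lemma sw1_invol (a b : ℂ) : Function.Involutive (sw1 a b) := by
  intro x; unfold sw1; split_ifs <;> simp_all
lemma sw1_left (a b : ℂ) : sw1 a b a = b := by simp [sw1]
lemma sw1_right (a b : ℂ) : sw1 a b b = a := by unfold sw1; split_ifs <;> simp_all
lemma sw1_other {a b x : ℂ} (h1 : x ≠ a) (h2 : x ≠ b) : sw1 a b x = x := by
  simp [sw1, h1, h2]
lemma sw1_comm {a b c d : ℂ} (hac : a ≠ c) (had : a ≠ d) (hbc : b ≠ c) (hbd : b ≠ d) :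
    sw1 a b ∘ sw1 c d = sw1 c d ∘ sw1 a b := by
  funext x; simp only [Function.comp]; unfold sw1; split_ifs <;> simp_all

def LineShift (u : ℂ) (f : ℂ → ℂ) : Prop := ∀ x, ∃ r : ℝ, f x = x + (r : ℂ) * u

lemma lineShift_comp {u : ℂ} {f g : ℂ → ℂ} (hf : LineShift u f) (hg : LineShift u g) :
    LineShift u (f ∘ g) := by
  intro x
  obtain ⟨r, hr⟩ := hg x
  obtain ⟨s, hs⟩ := hf (g x)
  exact ⟨r + s, by simp only [Function.comp]; rw [hs, hr]; push_cast; ring⟩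

lemma sw1_lineShift {u a b : ℂ} (h : ∃ r : ℝ, b = a + (r:ℂ) * u) :
    LineShift u (sw1 a b) := by
  obtain ⟨r, hr⟩ := h
  intro x
  by_cases h1 : x = a
  · exact ⟨r, by rw [h1, sw1_left, hr]⟩
  · by_cases h2 : x = b
    · exact ⟨-r, by rw [h2, sw1_right, hr]; push_cast; ring⟩
    · exact ⟨0, by rw [sw1_other h1 h2]; push_cast; ring⟩

lemma sw1_mapsTo {C : Set ℂ} {a b : ℂ} (ha : a ∈ C) (hb : b ∈ C) :
    ∀ x ∈ C, sw1 a b x ∈ C := by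
  intro x hx
  by_cases h1 : x = a
  · rw [h1, sw1_left]; exact hb
  · by_cases h2 : x = b
    · rw [h2, sw1_right]; exact ha
    · rw [sw1_other h1 h2]; exact hx

lemma invol_comp3 {f g h : ℂ → ℂ} (hf : Function.Involutive f) (hg : Function.Involutive g)
    (hh : Function.Involutive h) (hfg : f ∘ g = g ∘ f) (hfh : f ∘ h = h ∘ f)
    (hgh : g ∘ h = h ∘ g) : Function.Involutive (f ∘ g ∘ h) := by
  have key : (f ∘ g ∘ h) ∘ (f ∘ g ∘ h) = id := by
    calc (f ∘ g ∘ h) ∘ (f ∘ g ∘ h) = f ∘ (g ∘ (h ∘ f) ∘ g) ∘ h := by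
          simp only [Function.comp_assoc]
      _ = f ∘ (g ∘ (f ∘ h) ∘ g) ∘ h := by rw [hfh]
      _ = f ∘ ((g ∘ f) ∘ (h ∘ g)) ∘ h := by simp only [Function.comp_assoc]
      _ = f ∘ ((f ∘ g) ∘ (g ∘ h)) ∘ h := by rw [hfg, hgh]
      _ = (f ∘ f) ∘ (g ∘ g) ∘ (h ∘ h) := by simp only [Function.comp_assoc]
      _ = id := by rw [hf.comp_self, hg.comp_self, hh.comp_self]; rfl
  intro x
  exact congrFun key x
def ipf (w : ℂ) : ℂ →ₗ[ℝ] ℝ where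
  toFun x := w.re * x.re + w.im * x.im
  map_add' x y := by simp; ring
  map_smul' r x := by simp [Complex.smul_re, Complex.smul_im, smul_eq_mul]; ring

lemma invol_comp2 {f g : ℂ → ℂ} (hf : Function.Involutive f) (hg : Function.Involutive g)
    (hfg : f ∘ g = g ∘ f) : Function.Involutive (f ∘ g) := by
  have key : (f ∘ g) ∘ (f ∘ g) = id := by
    calc (f ∘ g) ∘ (f ∘ g) = f ∘ (g ∘ f) ∘ g := by simp only [Function.comp_assoc]
      _ = f ∘ (f ∘ g) ∘ g := by rw [hfg]
      _ = (f ∘ f) ∘ (g ∘ g) := by simp only [Function.comp_assoc]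
      _ = id := by rw [hf.comp_self, hg.comp_self]; rfl
  intro x; exact congrFun key x

lemma diff_ne {C A B : Set ℂ} {p0 : ℂ} (h1 : p0 ∈ C) (h2 : p0 ∈ A) (h3 : p0 ∉ B) :
    C \ A ≠ C \ B := by
  intro h
  have : p0 ∈ C \ B := ⟨h1, h3⟩
  rw [← h] at this
  exact this.2 h2

lemma segMain (Λ : Set ℂ) (t w u : ℂ) (hw : w ≠ 0) (hu : ∃ r : ℝ, w = (r:ℂ) * u)
    (h1 : t ∈ Λ) (h2 : t + w ∈ Λ) :
    ∃ C1 C2 : Set ℂ, IsConvexSubset Λ C1 ∧ IsConvexSubset Λ C2 ∧ C1 ≠ C2 ∧ SameXRay C1 C2 u := by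
  have hwsq : 0 < w.re * w.re + w.im * w.im := by
    have := Complex.normSq_pos.mpr hw
    simpa [Complex.normSq_apply] using this
  set V : Finset ℂ := {t, t + w} with hV
  have hVΛ : (V : Set ℂ) ⊆ Λ := by
    intro x hx
    simp only [hV, Finset.coe_insert, Finset.coe_singleton, Set.mem_insert_iff,
      Set.mem_singleton_iff] at hx
    rcases hx with rfl | rfl <;> assumption
  have htw : t ≠ t + w := by
    intro h; apply hw; linear_combination -h
  set C : Set ℂ := convexHull ℝ (V : Set ℂ) ∩ Λ with hCdef
  have hexpA : ∀ p ∈ ({t} : Set ℂ), ∃ f : ℂ →ₗ[ℝ] ℝ, ∀ v ∈ V, v ≠ p → f v < f p := by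
    rintro p rfl
    refine ⟨ipf (-w), ?_⟩
    intro v hv hne
    simp only [hV, Finset.mem_insert, Finset.mem_singleton] at hv
    rcases hv with rfl | rfl
    · exact absurd rfl hne
    · simp only [ipf, LinearMap.coe_mk, AddHom.coe_mk, Complex.neg_re, Complex.neg_im,
        Complex.add_re, Complex.add_im]
      nlinarith
  have hexpB : ∀ p ∈ ({t + w} : Set ℂ), ∃ f : ℂ →ₗ[ℝ] ℝ, ∀ v ∈ V, v ≠ p → f v < f p := by
    rintro p rfl
    refine ⟨ipf w, ?_⟩
    intro v hv hne
    simp only [hV, Finset.mem_insert, Finset.mem_singleton] at hv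
    rcases hv with rfl | rfl
    · simp only [ipf, LinearMap.coe_mk, AddHom.coe_mk, Complex.add_re, Complex.add_im]
      nlinarith
    · exact absurd rfl hne
  have htC : t ∈ C := ⟨subset_convexHull ℝ _ (by simp [hV]), h1⟩
  have htwC : t + w ∈ C := ⟨subset_convexHull ℝ _ (by simp [hV]), h2⟩
  refine ⟨C \ {t}, C \ {t + w}, convexSub Λ V hVΛ {t} hexpA, convexSub Λ V hVΛ {t+w} hexpB,
    diff_ne htC rfl (by simpa using htw), ?_⟩
  · apply xray C {t} {t+w} u (sw1 t (t+w)) (sw1_invol t (t+w))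
    · exact sw1_lineShift (by obtain ⟨r, hr⟩ := hu; exact ⟨r, by rw [← hr]⟩)
    · exact sw1_mapsTo htC htwC
    · rw [Set.image_singleton, sw1_left]
lemma lfun_lt' {e e' v p : ℂ} (d : ℂ) (hd : v - p = d)
    (h : det2 e e' * (det2 e' d - det2 e d) < 0) : lfun e e' v < lfun e e' p :=
  lfun_lt (by rw [hd]; exact h)

lemma parMain (Λ : Set ℂ) (t w1 w2 u1 u2 : ℂ) (hD : det2 w1 w2 ≠ 0)
    (hu1 : ∃ r : ℝ, w1 = (r:ℂ) * u1) (hu2 : ∃ r : ℝ, w2 = (r:ℂ) * u2)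
    (h1 : t ∈ Λ) (h2 : t + w1 ∈ Λ) (h3 : t + w2 ∈ Λ) (h4 : t + w1 + w2 ∈ Λ) :
    ∃ C1 C2 : Set ℂ, IsConvexSubset Λ C1 ∧ IsConvexSubset Λ C2 ∧ C1 ≠ C2 ∧
      SameXRay C1 C2 u1 ∧ SameXRay C1 C2 u2 := by
  have hD2 : 0 < det2 w1 w2 * det2 w1 w2 := mul_self_pos.mpr hD
  have h21 : det2 w2 w1 = - det2 w1 w2 := det2_comm _ _
  have hw1 : w1 ≠ 0 := ne_zero_left_of_det2 hD
  have hw2 : w2 ≠ 0 := ne_zero_right_of_det2 hD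
  have hw12 : w1 + w2 ≠ 0 := by
    intro h; apply hD
    have h0 : det2 (w1 + w2) w2 = 0 := by rw [h]; exact det2_zero_left w2
    rw [det2_add_left, det2_self, add_zero] at h0; exact h0
  have hw1m2 : w1 - w2 ≠ 0 := by
    intro h; apply hD
    have h0 : det2 (w1 - w2) w2 = 0 := by rw [h]; exact det2_zero_left w2
    rw [det2_sub_left, det2_self, sub_zero] at h0; exact h0
  have n12 : t ≠ t + w1 := fun h => hw1 (by linear_combination -h)
  have n13 : t ≠ t + w2 := fun h => hw2 (by linear_combination -h)
  have n14 : t ≠ t + w1 + w2 := fun h => hw12 (by linear_combination -h)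
  have n23 : t + w1 ≠ t + w2 := fun h => hw1m2 (by linear_combination h)
  have n24 : t + w1 ≠ t + w1 + w2 := fun h => hw2 (by linear_combination -h)
  have n34 : t + w2 ≠ t + w1 + w2 := fun h => hw1 (by linear_combination -h)
  set V : Finset ℂ := {t, t + w1, t + w2, t + w1 + w2} with hV
  have hVΛ : (V : Set ℂ) ⊆ Λ := by
    intro x hx
    simp only [hV, Finset.coe_insert, Finset.coe_singleton, Set.mem_insert_iff,
      Set.mem_singleton_iff] at hx
    rcases hx with rfl | rfl | rfl | rfl <;> assumption
  set C : Set ℂ := convexHull ℝ (V : Set ℂ) ∩ Λ with hCdef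
  have hmemC : ∀ x ∈ V, x ∈ C := fun x hx => ⟨subset_convexHull ℝ _ hx, hVΛ hx⟩
  have hmem : ∀ v, v ∈ V → v = t ∨ v = t + w1 ∨ v = t + w2 ∨ v = t + w1 + w2 := by
    intro v hv; simpa [hV] using hv
  have expP1 : ∃ f : ℂ →ₗ[ℝ] ℝ, ∀ v ∈ V, v ≠ t → f v < f t := by
    refine ⟨lfun w1 w2, ?_⟩
    intro v hv hne
    rcases hmem v hv with rfl | rfl | rfl | rfl
    · exact absurd rfl hne
    · refine lfun_lt' w1 (by ring) ?_
      simp only [det2_self, h21]; nlinarith [hD2]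
    · refine lfun_lt' w2 (by ring) ?_
      simp only [det2_self, h21]; nlinarith [hD2]
    · refine lfun_lt' (w1 + w2) (by ring) ?_
      simp only [det2_add_right, det2_self, h21]; nlinarith [hD2]
  have expP4 : ∃ f : ℂ →ₗ[ℝ] ℝ, ∀ v ∈ V, v ≠ t + w1 + w2 → f v < f (t + w1 + w2) := by
    refine ⟨lfun (-w1) (-w2), ?_⟩
    intro v hv hne
    rcases hmem v hv with rfl | rfl | rfl | rfl
    · refine lfun_lt' (-w1 - w2) (by ring) ?_
      simp only [det2_sub_right, det2_neg_left, det2_neg_right, det2_self, h21,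
        neg_neg, neg_zero]
      nlinarith [hD2]
    · refine lfun_lt' (-w2) (by ring) ?_
      simp only [det2_neg_left, det2_neg_right, det2_self, h21, neg_neg, neg_zero]
      nlinarith [hD2]
    · refine lfun_lt' (-w1) (by ring) ?_
      simp only [det2_neg_left, det2_neg_right, det2_self, h21, neg_neg, neg_zero]
      nlinarith [hD2]
    · exact absurd rfl hne
  have expP2 : ∃ f : ℂ →ₗ[ℝ] ℝ, ∀ v ∈ V, v ≠ t + w1 → f v < f (t + w1) := by
    refine ⟨lfun (-w1) w2, ?_⟩
    intro v hv hne
    rcases hmem v hv with rfl | rfl | rfl | rfl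
    · refine lfun_lt' (-w1) (by ring) ?_
      simp only [det2_neg_left, det2_neg_right, det2_self, h21, neg_neg, neg_zero]
      nlinarith [hD2]
    · exact absurd rfl hne
    · refine lfun_lt' (w2 - w1) (by ring) ?_
      simp only [det2_sub_right, det2_neg_left, det2_neg_right, det2_self, h21,
        neg_neg, neg_zero]
      nlinarith [hD2]
    · refine lfun_lt' w2 (by ring) ?_
      simp only [det2_neg_left, det2_neg_right, det2_self, h21, neg_neg, neg_zero]
      nlinarith [hD2]
  have expP3 : ∃ f : ℂ →ₗ[ℝ] ℝ, ∀ v ∈ V, v ≠ t + w2 → f v < f (t + w2) := by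
    refine ⟨lfun w1 (-w2), ?_⟩
    intro v hv hne
    rcases hmem v hv with rfl | rfl | rfl | rfl
    · refine lfun_lt' (-w2) (by ring) ?_
      simp only [det2_neg_left, det2_neg_right, det2_self, h21, neg_neg, neg_zero]
      nlinarith [hD2]
    · refine lfun_lt' (w1 - w2) (by ring) ?_
      simp only [det2_sub_right, det2_neg_left, det2_neg_right, det2_self, h21,
        neg_neg, neg_zero]
      nlinarith [hD2]
    · exact absurd rfl hne
    · refine lfun_lt' w1 (by ring) ?_
      simp only [det2_neg_left, det2_neg_right, det2_self, h21, neg_neg, neg_zero]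
      nlinarith [hD2]
  have hexpA : ∀ p ∈ ({t, t + w1 + w2} : Set ℂ), ∃ f : ℂ →ₗ[ℝ] ℝ,
      ∀ v ∈ V, v ≠ p → f v < f p := by
    intro p hp
    rcases hp with rfl | rfl
    · exact expP1
    · exact expP4
  have hexpB : ∀ p ∈ ({t + w1, t + w2} : Set ℂ), ∃ f : ℂ →ₗ[ℝ] ℝ,
      ∀ v ∈ V, v ≠ p → f v < f p := by
    intro p hp
    rcases hp with rfl | rfl
    · exact expP2
    · exact expP3
  have htC : t ∈ C := hmemC _ (by simp [hV])
  have h2C : t + w1 ∈ C := hmemC _ (by simp [hV])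
  have h3C : t + w2 ∈ C := hmemC _ (by simp [hV])
  have h4C : t + w1 + w2 ∈ C := hmemC _ (by simp [hV])
  refine ⟨C \ {t, t + w1 + w2}, C \ {t + w1, t + w2},
    convexSub Λ V hVΛ _ hexpA, convexSub Λ V hVΛ _ hexpB,
    diff_ne htC (by simp) (by simp [n12, n13]), ?_, ?_⟩
  · obtain ⟨r1, hr1⟩ := hu1
    set ι : ℂ → ℂ := sw1 t (t + w1) ∘ sw1 (t + w2) (t + w1 + w2) with hι
    have hcomm : sw1 t (t + w1) ∘ sw1 (t + w2) (t + w1 + w2)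
        = sw1 (t + w2) (t + w1 + w2) ∘ sw1 t (t + w1) := sw1_comm n13 n14 n23 n24
    have hinv : Function.Involutive ι := invol_comp2 (sw1_invol _ _) (sw1_invol _ _) hcomm
    have hls : LineShift u1 ι := lineShift_comp
      (sw1_lineShift ⟨r1, by rw [← hr1]⟩)
      (sw1_lineShift ⟨r1, by rw [← hr1]; ring⟩)
    have hmap : ∀ x ∈ C, ι x ∈ C := fun x hx =>
      sw1_mapsTo htC h2C _ (sw1_mapsTo h3C h4C x hx)
    apply xray C _ _ u1 ι hinv hls hmap
    have e1 : ι t = t + w1 := by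
      simp only [hι, Function.comp]
      rw [sw1_other n13 n14, sw1_left]
    have e2 : ι (t + w1 + w2) = t + w2 := by
      simp only [hι, Function.comp]
      rw [sw1_right]
      exact sw1_other n13.symm n23.symm
    rw [Set.image_pair, e1, e2]
  · obtain ⟨r2, hr2⟩ := hu2
    set ι : ℂ → ℂ := sw1 t (t + w2) ∘ sw1 (t + w1) (t + w1 + w2) with hι
    have hcomm : sw1 t (t + w2) ∘ sw1 (t + w1) (t + w1 + w2)
        = sw1 (t + w1) (t + w1 + w2) ∘ sw1 t (t + w2) :=
      sw1_comm n12 n14 n23.symm n34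
    have hinv : Function.Involutive ι := invol_comp2 (sw1_invol _ _) (sw1_invol _ _) hcomm
    have hls : LineShift u2 ι := lineShift_comp
      (sw1_lineShift ⟨r2, by rw [← hr2]⟩)
      (sw1_lineShift ⟨r2, by rw [← hr2]⟩)
    have hmap : ∀ x ∈ C, ι x ∈ C := fun x hx =>
      sw1_mapsTo htC h3C _ (sw1_mapsTo h2C h4C x hx)
    apply xray C _ _ u2 ι hinv hls hmap
    have e1 : ι t = t + w2 := by
      simp only [hι, Function.comp]
      rw [sw1_other n12 n14, sw1_left]
    have e2 : ι (t + w1 + w2) = t + w1 := by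
      simp only [hι, Function.comp]
      rw [sw1_right]
      exact sw1_other n12.symm n23
    rw [Set.image_pair, e1, e2, Set.pair_comm]
set_option maxHeartbeats 2000000 in
lemma hexMain (Λ : Set ℂ) (t wa wb wc u1 u2 u3 : ℂ)
    (hT : 0 < det2 wa wb)
    (hbc : det2 wb wc = det2 wa wb) (hac : det2 wa wc = det2 wa wb)
    (d1 : det2 (wa + wb + wc) wb = 0) (d2 : det2 (wb + wc - wa) wc = 0)
    (d3 : det2 (wc - wa - wb) wa = 0)
    (hu1 : ∃ r : ℝ, wa = (r:ℂ) * u1) (hu2 : ∃ r : ℝ, wb = (r:ℂ) * u2)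
    (hu3 : ∃ r : ℝ, wc = (r:ℂ) * u3)
    (m1 : t ∈ Λ) (m2 : t + wa ∈ Λ) (m3 : t + wa + wb ∈ Λ)
    (m4 : t + wa + wb + wc ∈ Λ) (m5 : t + wb + wc ∈ Λ) (m6 : t + wc ∈ Λ) :
    ∃ C1 C2 : Set ℂ, IsConvexSubset Λ C1 ∧ IsConvexSubset Λ C2 ∧ C1 ≠ C2 ∧
      SameXRay C1 C2 u1 ∧ SameXRay C1 C2 u2 ∧ SameXRay C1 C2 u3 := by
  have hDne : det2 wa wb ≠ 0 := ne_of_gt hT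
  have hD2 : 0 < det2 wa wb * det2 wa wb := mul_self_pos.mpr hDne
  have vba : det2 wb wa = - det2 wa wb := det2_comm _ _
  have vcb : det2 wc wb = - det2 wa wb := by rw [det2_comm wb wc]; linarith
  have vca : det2 wc wa = - det2 wa wb := by rw [det2_comm wa wc]; linarith
  -- nonzero vectors
  have hna : wa ≠ 0 := ne_zero_left_of_det2 hDne
  have hnb : wb ≠ 0 := ne_zero_right_of_det2 hDne
  have hnc : wc ≠ 0 := ne_zero_right_of_det2 (show det2 wb wc ≠ 0 by rw [hbc]; exact hDne)
  have hnab : wa + wb ≠ 0 := ne_zero_left_of_det2 (show det2 (wa + wb) wb ≠ 0 by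
    simp only [det2_add_left, det2_self, add_zero]; exact hDne)
  have hnabc : wa + wb + wc ≠ 0 := ne_zero_left_of_det2 (show det2 (wa + wb + wc) wc ≠ 0 by
    simp only [det2_add_left, det2_self, hac, hbc, add_zero]; intro h; nlinarith)
  have hnbc : wb + wc ≠ 0 := ne_zero_left_of_det2 (show det2 (wb + wc) wc ≠ 0 by
    simp only [det2_add_left, det2_self, hbc, add_zero]; exact hDne)
  have hnbca : wb + wc - wa ≠ 0 := ne_zero_left_of_det2 (show det2 (wb + wc - wa) wb ≠ 0 by
    simp only [det2_sub_left, det2_add_left, det2_self, vcb, zero_add]; intro h; nlinarith)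
  have hnca : wc - wa ≠ 0 := ne_zero_left_of_det2 (show det2 (wc - wa) wb ≠ 0 by
    simp only [det2_sub_left, vcb]; intro h; nlinarith)
  have hncab : wc - wa - wb ≠ 0 := ne_zero_left_of_det2 (show det2 (wc - wa - wb) wb ≠ 0 by
    simp only [det2_sub_left, det2_self, vcb, sub_zero]; intro h; nlinarith)
  -- parallel facts for diagonals
  obtain ⟨s2, hs2⟩ : ∃ r : ℝ, wa + wb + wc = (r:ℂ) * wb :=
    par_of_det2 (by rw [det2_comm]; rw [d1]; ring) hnb
  obtain ⟨s3, hs3⟩ : ∃ r : ℝ, wb + wc - wa = (r:ℂ) * wc :=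
    par_of_det2 (by rw [det2_comm]; rw [d2]; ring) hnc
  obtain ⟨s1, hs1⟩ : ∃ r : ℝ, wc - wa - wb = (r:ℂ) * wa :=
    par_of_det2 (by rw [det2_comm]; rw [d3]; ring) hna
  obtain ⟨r1, hr1⟩ := hu1
  obtain ⟨r2, hr2⟩ := hu2
  obtain ⟨r3, hr3⟩ := hu3
  -- vertex distinctness
  have n12 : t ≠ t + wa := fun h => hna (by linear_combination -h)
  have n13 : t ≠ t + wa + wb := fun h => hnab (by linear_combination -h)
  have n14 : t ≠ t + wa + wb + wc := fun h => hnabc (by linear_combination -h)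
  have n15 : t ≠ t + wb + wc := fun h => hnbc (by linear_combination -h)
  have n16 : t ≠ t + wc := fun h => hnc (by linear_combination -h)
  have n23 : t + wa ≠ t + wa + wb := fun h => hnb (by linear_combination -h)
  have n24 : t + wa ≠ t + wa + wb + wc := fun h => hnbc (by linear_combination -h)
  have n25 : t + wa ≠ t + wb + wc := fun h => hnbca (by linear_combination -h)
  have n26 : t + wa ≠ t + wc := fun h => hnca (by linear_combination -h)
  have n34 : t + wa + wb ≠ t + wa + wb + wc := fun h => hnc (by linear_combination -h)
  have n35 : t + wa + wb ≠ t + wb + wc := fun h => hnca (by linear_combination -h)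
  have n36 : t + wa + wb ≠ t + wc := fun h => hncab (by linear_combination -h)
  have n45 : t + wa + wb + wc ≠ t + wb + wc := fun h => hna (by linear_combination h)
  have n46 : t + wa + wb + wc ≠ t + wc := fun h => hnab (by linear_combination h)
  have n56 : t + wb + wc ≠ t + wc := fun h => hnb (by linear_combination h)
  set V : Finset ℂ := {t, t + wa, t + wa + wb, t + wa + wb + wc, t + wb + wc, t + wc} with hV
  have hVΛ : (V : Set ℂ) ⊆ Λ := by
    intro x hx
    simp only [hV, Finset.coe_insert, Finset.coe_singleton, Set.mem_insert_iff,
      Set.mem_singleton_iff] at hx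
    rcases hx with rfl | rfl | rfl | rfl | rfl | rfl <;> assumption
  set C : Set ℂ := convexHull ℝ (V : Set ℂ) ∩ Λ with hCdef
  have hmemC : ∀ x ∈ V, x ∈ C := fun x hx => ⟨subset_convexHull ℝ _ hx, hVΛ hx⟩
  have hmem : ∀ v, v ∈ V → v = t ∨ v = t + wa ∨ v = t + wa + wb ∨ v = t + wa + wb + wc ∨
      v = t + wb + wc ∨ v = t + wc := by
    intro v hv; simpa [hV] using hv
  have expP1 : ∃ f : ℂ →ₗ[ℝ] ℝ, ∀ v ∈ V, v ≠ t → f v < f t := by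
    refine ⟨lfun wa wc, ?_⟩
    intro v hv hne
    rcases hmem v hv with rfl | rfl | rfl | rfl | rfl | rfl
    · exact absurd rfl hne
    · refine lfun_lt' (wa) (by ring) ?_
      simp only [det2_add_left, det2_add_right, det2_sub_left, det2_sub_right, det2_neg_left, det2_neg_right, det2_self, hbc, hac, vba, vcb, vca, add_zero, zero_add, sub_zero, zero_sub, neg_neg, neg_zero]; nlinarith [hD2]
    · refine lfun_lt' (wa + wb) (by ring) ?_
      simp only [det2_add_left, det2_add_right, det2_sub_left, det2_sub_right, det2_neg_left, det2_neg_right, det2_self, hbc, hac, vba, vcb, vca, add_zero, zero_add, sub_zero, zero_sub, neg_neg, neg_zero]; nlinarith [hD2]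
    · refine lfun_lt' (wa + wb + wc) (by ring) ?_
      simp only [det2_add_left, det2_add_right, det2_sub_left, det2_sub_right, det2_neg_left, det2_neg_right, det2_self, hbc, hac, vba, vcb, vca, add_zero, zero_add, sub_zero, zero_sub, neg_neg, neg_zero]; nlinarith [hD2]
    · refine lfun_lt' (wb + wc) (by ring) ?_
      simp only [det2_add_left, det2_add_right, det2_sub_left, det2_sub_right, det2_neg_left, det2_neg_right, det2_self, hbc, hac, vba, vcb, vca, add_zero, zero_add, sub_zero, zero_sub, neg_neg, neg_zero]; nlinarith [hD2]
    · refine lfun_lt' (wc) (by ring) ?_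
      simp only [det2_add_left, det2_add_right, det2_sub_left, det2_sub_right, det2_neg_left, det2_neg_right, det2_self, hbc, hac, vba, vcb, vca, add_zero, zero_add, sub_zero, zero_sub, neg_neg, neg_zero]; nlinarith [hD2]
  have expP2 : ∃ f : ℂ →ₗ[ℝ] ℝ, ∀ v ∈ V, v ≠ t + wa → f v < f (t + wa) := by
    refine ⟨lfun (-wa) wb, ?_⟩
    intro v hv hne
    rcases hmem v hv with rfl | rfl | rfl | rfl | rfl | rfl
    · refine lfun_lt' (-wa) (by ring) ?_
      simp only [det2_add_left, det2_add_right, det2_sub_left, det2_sub_right, det2_neg_left, det2_neg_right, det2_self, hbc, hac, vba, vcb, vca, add_zero, zero_add, sub_zero, zero_sub, neg_neg, neg_zero]; nlinarith [hD2]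
    · exact absurd rfl hne
    · refine lfun_lt' (wb) (by ring) ?_
      simp only [det2_add_left, det2_add_right, det2_sub_left, det2_sub_right, det2_neg_left, det2_neg_right, det2_self, hbc, hac, vba, vcb, vca, add_zero, zero_add, sub_zero, zero_sub, neg_neg, neg_zero]; nlinarith [hD2]
    · refine lfun_lt' (wb + wc) (by ring) ?_
      simp only [det2_add_left, det2_add_right, det2_sub_left, det2_sub_right, det2_neg_left, det2_neg_right, det2_self, hbc, hac, vba, vcb, vca, add_zero, zero_add, sub_zero, zero_sub, neg_neg, neg_zero]; nlinarith [hD2]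
    · refine lfun_lt' (wb + wc - wa) (by ring) ?_
      simp only [det2_add_left, det2_add_right, det2_sub_left, det2_sub_right, det2_neg_left, det2_neg_right, det2_self, hbc, hac, vba, vcb, vca, add_zero, zero_add, sub_zero, zero_sub, neg_neg, neg_zero]; nlinarith [hD2]
    · refine lfun_lt' (wc - wa) (by ring) ?_
      simp only [det2_add_left, det2_add_right, det2_sub_left, det2_sub_right, det2_neg_left, det2_neg_right, det2_self, hbc, hac, vba, vcb, vca, add_zero, zero_add, sub_zero, zero_sub, neg_neg, neg_zero]; nlinarith [hD2]
  have expP3 : ∃ f : ℂ →ₗ[ℝ] ℝ, ∀ v ∈ V, v ≠ t + wa + wb → f v < f (t + wa + wb) := by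
    refine ⟨lfun (-wb) wc, ?_⟩
    intro v hv hne
    rcases hmem v hv with rfl | rfl | rfl | rfl | rfl | rfl
    · refine lfun_lt' (-wa - wb) (by ring) ?_
      simp only [det2_add_left, det2_add_right, det2_sub_left, det2_sub_right, det2_neg_left, det2_neg_right, det2_self, hbc, hac, vba, vcb, vca, add_zero, zero_add, sub_zero, zero_sub, neg_neg, neg_zero]; nlinarith [hD2]
    · refine lfun_lt' (-wb) (by ring) ?_
      simp only [det2_add_left, det2_add_right, det2_sub_left, det2_sub_right, det2_neg_left, det2_neg_right, det2_self, hbc, hac, vba, vcb, vca, add_zero, zero_add, sub_zero, zero_sub, neg_neg, neg_zero]; nlinarith [hD2]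
    · exact absurd rfl hne
    · refine lfun_lt' (wc) (by ring) ?_
      simp only [det2_add_left, det2_add_right, det2_sub_left, det2_sub_right, det2_neg_left, det2_neg_right, det2_self, hbc, hac, vba, vcb, vca, add_zero, zero_add, sub_zero, zero_sub, neg_neg, neg_zero]; nlinarith [hD2]
    · refine lfun_lt' (wc - wa) (by ring) ?_
      simp only [det2_add_left, det2_add_right, det2_sub_left, det2_sub_right, det2_neg_left, det2_neg_right, det2_self, hbc, hac, vba, vcb, vca, add_zero, zero_add, sub_zero, zero_sub, neg_neg, neg_zero]; nlinarith [hD2]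
    · refine lfun_lt' (wc - wa - wb) (by ring) ?_
      simp only [det2_add_left, det2_add_right, det2_sub_left, det2_sub_right, det2_neg_left, det2_neg_right, det2_self, hbc, hac, vba, vcb, vca, add_zero, zero_add, sub_zero, zero_sub, neg_neg, neg_zero]; nlinarith [hD2]
  have expP4 : ∃ f : ℂ →ₗ[ℝ] ℝ, ∀ v ∈ V, v ≠ t + wa + wb + wc → f v < f (t + wa + wb + wc) := by
    refine ⟨lfun (-wc) (-wa), ?_⟩
    intro v hv hne
    rcases hmem v hv with rfl | rfl | rfl | rfl | rfl | rfl
    · refine lfun_lt' (-wa - wb - wc) (by ring) ?_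
      simp only [det2_add_left, det2_add_right, det2_sub_left, det2_sub_right, det2_neg_left, det2_neg_right, det2_self, hbc, hac, vba, vcb, vca, add_zero, zero_add, sub_zero, zero_sub, neg_neg, neg_zero]; nlinarith [hD2]
    · refine lfun_lt' (-wb - wc) (by ring) ?_
      simp only [det2_add_left, det2_add_right, det2_sub_left, det2_sub_right, det2_neg_left, det2_neg_right, det2_self, hbc, hac, vba, vcb, vca, add_zero, zero_add, sub_zero, zero_sub, neg_neg, neg_zero]; nlinarith [hD2]
    · refine lfun_lt' (-wc) (by ring) ?_
      simp only [det2_add_left, det2_add_right, det2_sub_left, det2_sub_right, det2_neg_left, det2_neg_right, det2_self, hbc, hac, vba, vcb, vca, add_zero, zero_add, sub_zero, zero_sub, neg_neg, neg_zero]; nlinarith [hD2]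
    · exact absurd rfl hne
    · refine lfun_lt' (-wa) (by ring) ?_
      simp only [det2_add_left, det2_add_right, det2_sub_left, det2_sub_right, det2_neg_left, det2_neg_right, det2_self, hbc, hac, vba, vcb, vca, add_zero, zero_add, sub_zero, zero_sub, neg_neg, neg_zero]; nlinarith [hD2]
    · refine lfun_lt' (-wa - wb) (by ring) ?_
      simp only [det2_add_left, det2_add_right, det2_sub_left, det2_sub_right, det2_neg_left, det2_neg_right, det2_self, hbc, hac, vba, vcb, vca, add_zero, zero_add, sub_zero, zero_sub, neg_neg, neg_zero]; nlinarith [hD2]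
  have expP5 : ∃ f : ℂ →ₗ[ℝ] ℝ, ∀ v ∈ V, v ≠ t + wb + wc → f v < f (t + wb + wc) := by
    refine ⟨lfun wa (-wb), ?_⟩
    intro v hv hne
    rcases hmem v hv with rfl | rfl | rfl | rfl | rfl | rfl
    · refine lfun_lt' (-wb - wc) (by ring) ?_
      simp only [det2_add_left, det2_add_right, det2_sub_left, det2_sub_right, det2_neg_left, det2_neg_right, det2_self, hbc, hac, vba, vcb, vca, add_zero, zero_add, sub_zero, zero_sub, neg_neg, neg_zero]; nlinarith [hD2]
    · refine lfun_lt' (wa - wb - wc) (by ring) ?_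
      simp only [det2_add_left, det2_add_right, det2_sub_left, det2_sub_right, det2_neg_left, det2_neg_right, det2_self, hbc, hac, vba, vcb, vca, add_zero, zero_add, sub_zero, zero_sub, neg_neg, neg_zero]; nlinarith [hD2]
    · refine lfun_lt' (wa - wc) (by ring) ?_
      simp only [det2_add_left, det2_add_right, det2_sub_left, det2_sub_right, det2_neg_left, det2_neg_right, det2_self, hbc, hac, vba, vcb, vca, add_zero, zero_add, sub_zero, zero_sub, neg_neg, neg_zero]; nlinarith [hD2]
    · refine lfun_lt' (wa) (by ring) ?_
      simp only [det2_add_left, det2_add_right, det2_sub_left, det2_sub_right, det2_neg_left, det2_neg_right, det2_self, hbc, hac, vba, vcb, vca, add_zero, zero_add, sub_zero, zero_sub, neg_neg, neg_zero]; nlinarith [hD2]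
    · exact absurd rfl hne
    · refine lfun_lt' (-wb) (by ring) ?_
      simp only [det2_add_left, det2_add_right, det2_sub_left, det2_sub_right, det2_neg_left, det2_neg_right, det2_self, hbc, hac, vba, vcb, vca, add_zero, zero_add, sub_zero, zero_sub, neg_neg, neg_zero]; nlinarith [hD2]
  have expP6 : ∃ f : ℂ →ₗ[ℝ] ℝ, ∀ v ∈ V, v ≠ t + wc → f v < f (t + wc) := by
    refine ⟨lfun wb (-wc), ?_⟩
    intro v hv hne
    rcases hmem v hv with rfl | rfl | rfl | rfl | rfl | rfl
    · refine lfun_lt' (-wc) (by ring) ?_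
      simp only [det2_add_left, det2_add_right, det2_sub_left, det2_sub_right, det2_neg_left, det2_neg_right, det2_self, hbc, hac, vba, vcb, vca, add_zero, zero_add, sub_zero, zero_sub, neg_neg, neg_zero]; nlinarith [hD2]
    · refine lfun_lt' (wa - wc) (by ring) ?_
      simp only [det2_add_left, det2_add_right, det2_sub_left, det2_sub_right, det2_neg_left, det2_neg_right, det2_self, hbc, hac, vba, vcb, vca, add_zero, zero_add, sub_zero, zero_sub, neg_neg, neg_zero]; nlinarith [hD2]
    · refine lfun_lt' (wa + wb - wc) (by ring) ?_
      simp only [det2_add_left, det2_add_right, det2_sub_left, det2_sub_right, det2_neg_left, det2_neg_right, det2_self, hbc, hac, vba, vcb, vca, add_zero, zero_add, sub_zero, zero_sub, neg_neg, neg_zero]; nlinarith [hD2]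
    · refine lfun_lt' (wa + wb) (by ring) ?_
      simp only [det2_add_left, det2_add_right, det2_sub_left, det2_sub_right, det2_neg_left, det2_neg_right, det2_self, hbc, hac, vba, vcb, vca, add_zero, zero_add, sub_zero, zero_sub, neg_neg, neg_zero]; nlinarith [hD2]
    · refine lfun_lt' (wb) (by ring) ?_
      simp only [det2_add_left, det2_add_right, det2_sub_left, det2_sub_right, det2_neg_left, det2_neg_right, det2_self, hbc, hac, vba, vcb, vca, add_zero, zero_add, sub_zero, zero_sub, neg_neg, neg_zero]; nlinarith [hD2]
    · exact absurd rfl hne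
  have hexpA : ∀ p ∈ ({t, t + wa + wb, t + wb + wc} : Set ℂ), ∃ f : ℂ →ₗ[ℝ] ℝ,
      ∀ v ∈ V, v ≠ p → f v < f p := by
    intro p hp
    rcases hp with rfl | rfl | rfl
    · exact expP1
    · exact expP3
    · exact expP5
  have hexpB : ∀ p ∈ ({t + wa, t + wa + wb + wc, t + wc} : Set ℂ), ∃ f : ℂ →ₗ[ℝ] ℝ,
      ∀ v ∈ V, v ≠ p → f v < f p := by
    intro p hp
    rcases hp with rfl | rfl | rfl
    · exact expP2
    · exact expP4
    · exact expP6
  have c1 : t ∈ C := hmemC _ (by simp [hV])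
  have c2 : t + wa ∈ C := hmemC _ (by simp [hV])
  have c3 : t + wa + wb ∈ C := hmemC _ (by simp [hV])
  have c4 : t + wa + wb + wc ∈ C := hmemC _ (by simp [hV])
  have c5 : t + wb + wc ∈ C := hmemC _ (by simp [hV])
  have c6 : t + wc ∈ C := hmemC _ (by simp [hV])
  refine ⟨C \ {t, t + wa + wb, t + wb + wc}, C \ {t + wa, t + wa + wb + wc, t + wc},
    convexSub Λ V hVΛ _ hexpA, convexSub Λ V hVΛ _ hexpB,
    diff_ne c1 (by simp) (by simp [n12, n14, n16]), ?_, ?_, ?_⟩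
  · -- direction u1: pairs (p1,p2), (p3,p6), (p4,p5)
    set ι : ℂ → ℂ := sw1 t (t + wa) ∘ sw1 (t + wa + wb) (t + wc)
        ∘ sw1 (t + wa + wb + wc) (t + wb + wc) with hι
    have hc12 : sw1 t (t + wa) ∘ sw1 (t + wa + wb) (t + wc)
        = sw1 (t + wa + wb) (t + wc) ∘ sw1 t (t + wa) := sw1_comm n13 n16 n23 n26
    have hc13 : sw1 t (t + wa) ∘ sw1 (t + wa + wb + wc) (t + wb + wc)
        = sw1 (t + wa + wb + wc) (t + wb + wc) ∘ sw1 t (t + wa) := sw1_comm n14 n15 n24 n25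
    have hc23 : sw1 (t + wa + wb) (t + wc) ∘ sw1 (t + wa + wb + wc) (t + wb + wc)
        = sw1 (t + wa + wb + wc) (t + wb + wc) ∘ sw1 (t + wa + wb) (t + wc) :=
      sw1_comm n34 n35 n46.symm n56.symm
    have hinv : Function.Involutive ι :=
      invol_comp3 (sw1_invol _ _) (sw1_invol _ _) (sw1_invol _ _) hc12 hc13 hc23
    have hls : LineShift u1 ι := lineShift_comp (sw1_lineShift ⟨r1, by rw [← hr1]⟩)
      (lineShift_comp
        (sw1_lineShift ⟨s1 * r1, by push_cast; linear_combination hs1 + (s1:ℂ) * hr1⟩)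
        (sw1_lineShift ⟨-r1, by push_cast; linear_combination -hr1⟩))
    have hmap : ∀ x ∈ C, ι x ∈ C := fun x hx =>
      sw1_mapsTo c1 c2 _ (sw1_mapsTo c3 c6 _ (sw1_mapsTo c4 c5 x hx))
    apply xray C _ _ u1 ι hinv hls hmap
    have e1 : ι t = t + wa := by
      simp only [hι, Function.comp]
      rw [sw1_other n14 n15, sw1_other n13 n16, sw1_left]
    have e3 : ι (t + wa + wb) = t + wc := by
      simp only [hι, Function.comp]
      rw [sw1_other n34 n35, sw1_left]
      exact sw1_other n16.symm n26.symm
    have e5 : ι (t + wb + wc) = t + wa + wb + wc := by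
      simp only [hι, Function.comp]
      rw [sw1_right, sw1_other n34.symm n46]
      exact sw1_other n14.symm n24.symm
    rw [show ({t, t + wa + wb, t + wb + wc} : Set ℂ)
        = insert t (insert (t + wa + wb) {t + wb + wc}) from rfl]
    rw [Set.image_insert_eq, Set.image_insert_eq, Set.image_singleton, e1, e3, e5]
    ext x
    simp only [Set.mem_insert_iff, Set.mem_singleton_iff]
    tauto
  · -- direction u2: pairs (p2,p3), (p6,p5), (p1,p4)
    set ι : ℂ → ℂ := sw1 (t + wa) (t + wa + wb) ∘ sw1 (t + wc) (t + wb + wc)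
        ∘ sw1 t (t + wa + wb + wc) with hι
    have hc12 : sw1 (t + wa) (t + wa + wb) ∘ sw1 (t + wc) (t + wb + wc)
        = sw1 (t + wc) (t + wb + wc) ∘ sw1 (t + wa) (t + wa + wb) :=
      sw1_comm n26 n25 n36 n35
    have hc13 : sw1 (t + wa) (t + wa + wb) ∘ sw1 t (t + wa + wb + wc)
        = sw1 t (t + wa + wb + wc) ∘ sw1 (t + wa) (t + wa + wb) :=
      sw1_comm n12.symm n24 n13.symm n34
    have hc23 : sw1 (t + wc) (t + wb + wc) ∘ sw1 t (t + wa + wb + wc)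
        = sw1 t (t + wa + wb + wc) ∘ sw1 (t + wc) (t + wb + wc) :=
      sw1_comm n16.symm n46.symm n15.symm n45.symm
    have hinv : Function.Involutive ι :=
      invol_comp3 (sw1_invol _ _) (sw1_invol _ _) (sw1_invol _ _) hc12 hc13 hc23
    have hls : LineShift u2 ι := lineShift_comp (sw1_lineShift ⟨r2, by rw [← hr2]⟩)
      (lineShift_comp
        (sw1_lineShift ⟨r2, by rw [← hr2]; ring⟩)
        (sw1_lineShift ⟨s2 * r2, by push_cast; linear_combination hs2 + (s2:ℂ) * hr2⟩))
    have hmap : ∀ x ∈ C, ι x ∈ C := fun x hx =>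
      sw1_mapsTo c2 c3 _ (sw1_mapsTo c6 c5 _ (sw1_mapsTo c1 c4 x hx))
    apply xray C _ _ u2 ι hinv hls hmap
    have e1 : ι t = t + wa + wb + wc := by
      simp only [hι, Function.comp]
      rw [sw1_left, sw1_other n46 n45]
      exact sw1_other n24.symm n34.symm
    have e3 : ι (t + wa + wb) = t + wa := by
      simp only [hι, Function.comp]
      rw [sw1_other n13.symm n34, sw1_other n36 n35]
      exact sw1_right _ _
    have e5 : ι (t + wb + wc) = t + wc := by
      simp only [hι, Function.comp]
      rw [sw1_other n15.symm n45.symm, sw1_right]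
      exact sw1_other n26.symm n36.symm
    rw [show ({t, t + wa + wb, t + wb + wc} : Set ℂ)
        = insert t (insert (t + wa + wb) {t + wb + wc}) from rfl]
    rw [Set.image_insert_eq, Set.image_insert_eq, Set.image_singleton, e1, e3, e5]
    ext x
    simp only [Set.mem_insert_iff, Set.mem_singleton_iff]
    tauto
  · -- direction u3: pairs (p1,p6), (p3,p4), (p2,p5)
    set ι : ℂ → ℂ := sw1 t (t + wc) ∘ sw1 (t + wa + wb) (t + wa + wb + wc)
        ∘ sw1 (t + wa) (t + wb + wc) with hι
    have hc12 : sw1 t (t + wc) ∘ sw1 (t + wa + wb) (t + wa + wb + wc)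
        = sw1 (t + wa + wb) (t + wa + wb + wc) ∘ sw1 t (t + wc) :=
      sw1_comm n13 n14 n36.symm n46.symm
    have hc13 : sw1 t (t + wc) ∘ sw1 (t + wa) (t + wb + wc)
        = sw1 (t + wa) (t + wb + wc) ∘ sw1 t (t + wc) :=
      sw1_comm n12 n15 n26.symm n56.symm
    have hc23 : sw1 (t + wa + wb) (t + wa + wb + wc) ∘ sw1 (t + wa) (t + wb + wc)
        = sw1 (t + wa) (t + wb + wc) ∘ sw1 (t + wa + wb) (t + wa + wb + wc) :=
      sw1_comm n23.symm n35 n24.symm n45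
    have hinv : Function.Involutive ι :=
      invol_comp3 (sw1_invol _ _) (sw1_invol _ _) (sw1_invol _ _) hc12 hc13 hc23
    have hls : LineShift u3 ι := lineShift_comp (sw1_lineShift ⟨r3, by rw [← hr3]⟩)
      (lineShift_comp
        (sw1_lineShift ⟨r3, by rw [← hr3]⟩)
        (sw1_lineShift ⟨s3 * r3, by push_cast; linear_combination hs3 + (s3:ℂ) * hr3⟩))
    have hmap : ∀ x ∈ C, ι x ∈ C := fun x hx =>
      sw1_mapsTo c1 c6 _ (sw1_mapsTo c3 c4 _ (sw1_mapsTo c2 c5 x hx))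
    apply xray C _ _ u3 ι hinv hls hmap
    have e1 : ι t = t + wc := by
      simp only [hι, Function.comp]
      rw [sw1_other n12 n15, sw1_other n13 n14, sw1_left]
    have e3 : ι (t + wa + wb) = t + wa + wb + wc := by
      simp only [hι, Function.comp]
      rw [sw1_other n23.symm n35, sw1_left]
      exact sw1_other n14.symm n46
    have e5 : ι (t + wb + wc) = t + wa := by
      simp only [hι, Function.comp]
      rw [sw1_right, sw1_other n23 n24]
      exact sw1_other n12.symm n26
    rw [show ({t, t + wa + wb, t + wb + wc} : Set ℂ)
        = insert t (insert (t + wa + wb) {t + wb + wc}) from rfl]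
    rw [Set.image_insert_eq, Set.image_insert_eq, Set.image_singleton, e1, e3, e5]
    ext x
    simp only [Set.mem_insert_iff, Set.mem_singleton_iff]
    tauto
lemma det2_conj (z w : ℂ) : ((det2 z w : ℝ) : ℂ) * (2 * Complex.I)
    = (starRingEnd ℂ) z * w - z * (starRingEnd ℂ) w := by
  apply Complex.ext <;>
    simp [det2, Complex.mul_re, Complex.mul_im, Complex.conj_re, Complex.conj_im] <;> ring

lemma zmem {Λ : Set ℂ} {z : ℂ} (hz : z ∈ diffSet Λ) : z ∈ KField Λ :=
  Subfield.subset_closure (Or.inl hz)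

lemma conjmem {Λ : Set ℂ} {z : ℂ} (hz : z ∈ diffSet Λ) : (starRingEnd ℂ) z ∈ KField Λ :=
  Subfield.subset_closure (Or.inr ⟨z, hz, rfl⟩)

lemma hexCase (Λ : Set ℂ)
    (hom : ∀ F : Finset ℂ, (F : Set ℂ) ⊆ (KField Λ : Set ℂ) →
      ∃ (l : ℝ) (t : ℂ), 0 < l ∧ ∀ z ∈ F, (l : ℂ) * z + t ∈ Λ)
    (u1 u2 u3 z1 z2 z3 : ℂ)
    (hz1 : z1 ∈ diffSet Λ) (hz2 : z2 ∈ diffSet Λ) (hz3 : z3 ∈ diffSet Λ)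
    (hp1 : ∃ s : ℝ, z1 = (s:ℂ) * u1) (hp2 : ∃ s : ℝ, z2 = (s:ℂ) * u2)
    (hp3 : ∃ s : ℝ, z3 = (s:ℂ) * u3)
    (h12 : det2 z1 z2 ≠ 0) (h13 : det2 z1 z3 ≠ 0) (h23 : det2 z2 z3 ≠ 0)
    (hP : 0 < det2 z1 z2 * det2 z1 z3 * det2 z2 z3) :
    ∃ C1 C2 : Set ℂ, IsConvexSubset Λ C1 ∧ IsConvexSubset Λ C2 ∧ C1 ≠ C2 ∧
      SameXRay C1 C2 u1 ∧ SameXRay C1 C2 u2 ∧ SameXRay C1 C2 u3 := by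
  set q1 : ℝ := det2 z2 z3 / det2 z1 z2 with hq1
  set q2 : ℝ := det2 z1 z3 / det2 z1 z2 with hq2
  set a : ℂ := (q1:ℂ) * z1 with ha
  set b : ℂ := (q2:ℂ) * z2 with hb
  -- determinant facts
  have hab : det2 a b = q1 * q2 * det2 z1 z2 := by
    rw [ha, hb, det2_smul_left, det2_smul_right]; ring
  have hTpos : 0 < det2 a b := by
    rw [hab, hq1, hq2]
    have h2 : 0 < det2 z1 z2 * det2 z1 z2 := mul_self_pos.mpr h12
    rw [div_mul_div_comm, div_mul_eq_mul_div, div_pos_iff]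
    left
    constructor
    · nlinarith
    · nlinarith
  have hbc : det2 b z3 = det2 a b := by
    rw [hab, hb, det2_smul_left, hq1, hq2]
    field_simp
  have hac : det2 a z3 = det2 a b := by
    rw [hab, ha, det2_smul_left, hq1, hq2]
    field_simp
  have d1 : det2 (a + b + z3) b = 0 := by
    have e1 : det2 z3 b = - det2 b z3 := det2_comm _ _
    rw [det2_add_left, det2_add_left, det2_self, e1, hbc]
    ring
  have d2 : det2 (b + z3 - a) z3 = 0 := by
    have e1 : det2 z3 z3 = 0 := det2_self _
    rw [det2_sub_left, det2_add_left, e1, hbc, hac]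
    ring
  have d3 : det2 (z3 - a - b) a = 0 := by
    have e1 : det2 z3 a = - det2 a z3 := det2_comm _ _
    have e2 : det2 b a = - det2 a b := det2_comm _ _
    rw [det2_sub_left, det2_sub_left, det2_self, e1, e2, hac]
    ring
  -- membership in KField
  have htwoI : (2 * Complex.I) ≠ 0 := by simp [Complex.I_ne_zero]
  have hamem : a ∈ KField Λ := by
    have hcast : ((q1:ℝ):ℂ)
        = ((starRingEnd ℂ) z2 * z3 - z2 * (starRingEnd ℂ) z3)
          / ((starRingEnd ℂ) z1 * z2 - z1 * (starRingEnd ℂ) z2) := by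
      rw [← det2_conj z2 z3, ← det2_conj z1 z2, mul_div_mul_right _ _ htwoI, hq1]
      push_cast
      ring
    rw [ha, hcast]
    exact mul_mem (div_mem (sub_mem (mul_mem (conjmem hz2) (zmem hz3))
      (mul_mem (zmem hz2) (conjmem hz3)))
      (sub_mem (mul_mem (conjmem hz1) (zmem hz2)) (mul_mem (zmem hz1) (conjmem hz2))))
      (zmem hz1)
  have hbmem : b ∈ KField Λ := by
    have hcast : ((q2:ℝ):ℂ)
        = ((starRingEnd ℂ) z1 * z3 - z1 * (starRingEnd ℂ) z3)
          / ((starRingEnd ℂ) z1 * z2 - z1 * (starRingEnd ℂ) z2) := by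
      rw [← det2_conj z1 z3, ← det2_conj z1 z2, mul_div_mul_right _ _ htwoI, hq2]
      push_cast
      ring
    rw [hb, hcast]
    exact mul_mem (div_mem (sub_mem (mul_mem (conjmem hz1) (zmem hz3))
      (mul_mem (zmem hz1) (conjmem hz3)))
      (sub_mem (mul_mem (conjmem hz1) (zmem hz2)) (mul_mem (zmem hz1) (conjmem hz2))))
      (zmem hz2)
  have hcmem : z3 ∈ KField Λ := zmem hz3
  -- homothety
  set F : Finset ℂ := {0, a, a + b, a + b + z3, b + z3, z3} with hF
  have hFK : (F : Set ℂ) ⊆ (KField Λ : Set ℂ) := by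
    intro x hx
    simp only [hF, Finset.coe_insert, Finset.coe_singleton, Set.mem_insert_iff,
      Set.mem_singleton_iff] at hx
    rcases hx with rfl | rfl | rfl | rfl | rfl | rfl
    · exact zero_mem _
    · exact hamem
    · exact add_mem hamem hbmem
    · exact add_mem (add_mem hamem hbmem) hcmem
    · exact add_mem hbmem hcmem
    · exact hcmem
  obtain ⟨l, t, hl, hin⟩ := hom F hFK
  have hlC : (l:ℂ) ≠ 0 := Complex.ofReal_ne_zero.mpr (ne_of_gt hl)
  set wa : ℂ := (l:ℂ) * a with hwa
  set wb : ℂ := (l:ℂ) * b with hwb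
  set wc : ℂ := (l:ℂ) * z3 with hwc
  have m1 : t ∈ Λ := by
    have := hin 0 (by simp [hF])
    simpa using this
  have m2 : t + wa ∈ Λ := by
    have := hin a (by simp [hF])
    rw [show (l:ℂ) * a + t = t + wa from by rw [hwa]; ring] at this
    exact this
  have m3 : t + wa + wb ∈ Λ := by
    have := hin (a + b) (by simp [hF])
    rw [show (l:ℂ) * (a + b) + t = t + wa + wb from by rw [hwa, hwb]; ring] at this
    exact this
  have m4 : t + wa + wb + wc ∈ Λ := by
    have := hin (a + b + z3) (by simp [hF])
    rw [show (l:ℂ) * (a + b + z3) + t = t + wa + wb + wc from by rw [hwa, hwb, hwc]; ring] at this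
    exact this
  have m5 : t + wb + wc ∈ Λ := by
    have := hin (b + z3) (by simp [hF])
    rw [show (l:ℂ) * (b + z3) + t = t + wb + wc from by rw [hwb, hwc]; ring] at this
    exact this
  have m6 : t + wc ∈ Λ := by
    have := hin z3 (by simp [hF])
    rw [show (l:ℂ) * z3 + t = t + wc from by rw [hwc]; ring] at this
    exact this
  -- scaled determinant facts
  have sab : det2 wa wb = l * (l * det2 a b) := by
    rw [hwa, hwb, det2_smul_left, det2_smul_right]
  have hT' : 0 < det2 wa wb := by rw [sab]; positivity
  have hbc' : det2 wb wc = det2 wa wb := by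
    rw [sab, hwb, hwc, det2_smul_left, det2_smul_right, hbc]
  have hac' : det2 wa wc = det2 wa wb := by
    rw [sab, hwa, hwc, det2_smul_left, det2_smul_right, hac]
  have d1' : det2 (wa + wb + wc) wb = 0 := by
    rw [show wa + wb + wc = (l:ℂ) * (a + b + z3) from by rw [hwa, hwb, hwc]; ring,
      hwb, det2_smul_left, det2_smul_right, d1]
    ring
  have d2' : det2 (wb + wc - wa) wc = 0 := by
    rw [show wb + wc - wa = (l:ℂ) * (b + z3 - a) from by rw [hwa, hwb, hwc]; ring,
      hwc, det2_smul_left, det2_smul_right, d2]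
    ring
  have d3' : det2 (wc - wa - wb) wa = 0 := by
    rw [show wc - wa - wb = (l:ℂ) * (z3 - a - b) from by rw [hwa, hwb, hwc]; ring,
      hwa, det2_smul_left, det2_smul_right, d3]
    ring
  obtain ⟨s1, hs1⟩ := hp1
  obtain ⟨s2, hs2⟩ := hp2
  obtain ⟨s3, hs3⟩ := hp3
  have hu1 : ∃ r : ℝ, wa = (r:ℂ) * u1 :=
    ⟨l * q1 * s1, by rw [hwa, ha, hs1]; push_cast; ring⟩
  have hu2 : ∃ r : ℝ, wb = (r:ℂ) * u2 :=
    ⟨l * q2 * s2, by rw [hwb, hb, hs2]; push_cast; ring⟩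
  have hu3 : ∃ r : ℝ, wc = (r:ℂ) * u3 :=
    ⟨l * s3, by rw [hwc, hs3]; push_cast; ring⟩
  exact hexMain Λ t wa wb wc u1 u2 u3 hT' hbc' hac' d1' d2' d3' hu1 hu2 hu3 m1 m2 m3 m4 m5 m6
lemma det2_ne_of_dirs {u v z1 z2 : ℂ} (hz1 : z1 ≠ 0) (hz2 : z2 ≠ 0)
    (h1 : ∃ s : ℝ, z1 = (s:ℂ) * u) (h2 : ∃ s : ℝ, z2 = (s:ℂ) * v)
    (hnp : ¬ Par u v) : det2 z1 z2 ≠ 0 := by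
  intro h
  obtain ⟨r, hr⟩ := par_of_det2 h hz1
  obtain ⟨s1, hs1⟩ := h1
  obtain ⟨s2, hs2⟩ := h2
  have hs2' : (s2:ℂ) ≠ 0 := by
    intro h0; apply hz2; rw [hs2, h0, zero_mul]
  apply hnp
  refine ⟨r * s1 / s2, ?_⟩
  have key : (s2:ℂ) * v = ((r * s1 : ℝ):ℂ) * u := by
    push_cast
    rw [← hs2, hr, hs1]
    ring
  rw [show ((r * s1 / s2 : ℝ):ℂ) = ((r * s1 : ℝ):ℂ) / ((s2:ℝ):ℂ) from by push_cast; ring]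
  rw [div_mul_eq_mul_div, eq_div_iff hs2']
  linear_combination key


/-- Let `n ≥ 3` and `Λ` an `n`-cyclotomic Delone set. Then for every set
`U ⊆ S¹` of pairwise nonparallel `Λ`-directions with `card U < 4`, there exist two
distinct convex subsets of `Λ` having the same X-rays in all directions of `U`. -/
theorem stmt11 (n : ℕ) (hn : 3 ≤ n) (Λ : Set ℂ) (hΛ : IsCycDelone n Λ)
    (U : Finset ℂ) (hdir : ∀ u ∈ U, IsDir Λ u) (hpar : PwNonPar (U : Set ℂ))
    (hcard : U.card < 4) :
    ∃ C₁ C₂ : Set ℂ, IsConvexSubset Λ C₁ ∧ IsConvexSubset Λ C₂ ∧ C₁ ≠ C₂ ∧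
      ∀ u ∈ U, SameXRay C₁ C₂ u := by
  obtain ⟨hDel, hKc, hom⟩ := hΛ
  have hc4 : U.card = 0 ∨ U.card = 1 ∨ U.card = 2 ∨ U.card = 3 := by omega
  rcases hc4 with h0 | h1 | h2 | h3
  · -- card 0
    rw [Finset.card_eq_zero] at h0
    subst h0
    obtain ⟨R, hR, hrel⟩ := hDel.2
    obtain ⟨x, hx, -⟩ := hrel 0
    refine ⟨∅, {x}, ?_, ?_, (Set.singleton_ne_empty x).symm, ?_⟩
    · exact ⟨fun y hy => absurd hy (Set.notMem_empty y), Bornology.isBounded_empty,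
        by simp [convexHull_empty]⟩
    · refine ⟨by simpa using hx, Bornology.isBounded_singleton, ?_⟩
      rw [convexHull_singleton]
      exact (Set.inter_eq_left.mpr (by simpa using hx)).symm
    · intro u hu
      exact absurd hu (Finset.notMem_empty u)
  · -- card 1
    obtain ⟨u, hU⟩ := Finset.card_eq_one.mp h1
    obtain ⟨-, z, hzd, hz0, s, hs⟩ := hdir u (by simp [hU])
    have hF : (({0, z} : Finset ℂ) : Set ℂ) ⊆ (KField Λ : Set ℂ) := by
      intro x hx
      simp only [Finset.coe_insert, Finset.coe_singleton, Set.mem_insert_iff,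
        Set.mem_singleton_iff] at hx
      rcases hx with rfl | rfl
      · exact zero_mem _
      · exact zmem hzd
    obtain ⟨l, t, hl, hin⟩ := hom _ hF
    have h1' : t ∈ Λ := by simpa using hin 0 (by simp)
    have h2' : t + (l:ℂ) * z ∈ Λ := by
      have := hin z (by simp)
      rwa [show (l:ℂ) * z + t = t + (l:ℂ) * z from by ring] at this
    obtain ⟨C1, C2, hC1, hC2, hne, hxr⟩ := segMain Λ t ((l:ℂ) * z) u
      (mul_ne_zero (Complex.ofReal_ne_zero.mpr (ne_of_gt hl)) hz0)
      ⟨l * s, by rw [hs]; push_cast; ring⟩ h1' h2'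
    refine ⟨C1, C2, hC1, hC2, hne, fun u' hu' => ?_⟩
    have : u' = u := by
      rw [hU] at hu'
      simpa using hu'
    rwa [this]
  · -- card 2
    obtain ⟨u, v, huv, hU⟩ := Finset.card_eq_two.mp h2
    obtain ⟨-, z1, hz1d, hz10, s1, hs1⟩ := hdir u (by simp [hU])
    obtain ⟨-, z2, hz2d, hz20, s2, hs2⟩ := hdir v (by simp [hU])
    have hnp : ¬ Par u v := hpar u (by simp [hU]) v (by simp [hU]) huv
    have hD : det2 z1 z2 ≠ 0 := det2_ne_of_dirs hz10 hz20 ⟨s1, hs1⟩ ⟨s2, hs2⟩ hnp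
    have hF : (({0, z1, z2, z1 + z2} : Finset ℂ) : Set ℂ) ⊆ (KField Λ : Set ℂ) := by
      intro x hx
      simp only [Finset.coe_insert, Finset.coe_singleton, Set.mem_insert_iff,
        Set.mem_singleton_iff] at hx
      rcases hx with rfl | rfl | rfl | rfl
      · exact zero_mem _
      · exact zmem hz1d
      · exact zmem hz2d
      · exact add_mem (zmem hz1d) (zmem hz2d)
    obtain ⟨l, t, hl, hin⟩ := hom _ hF
    have hlne : (l:ℝ) ≠ 0 := ne_of_gt hl
    have m1 : t ∈ Λ := by simpa using hin 0 (by simp)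
    have m2 : t + (l:ℂ) * z1 ∈ Λ := by
      have := hin z1 (by simp)
      rwa [show (l:ℂ) * z1 + t = t + (l:ℂ) * z1 from by ring] at this
    have m3 : t + (l:ℂ) * z2 ∈ Λ := by
      have := hin z2 (by simp)
      rwa [show (l:ℂ) * z2 + t = t + (l:ℂ) * z2 from by ring] at this
    have m4 : t + (l:ℂ) * z1 + (l:ℂ) * z2 ∈ Λ := by
      have := hin (z1 + z2) (by simp)
      rwa [show (l:ℂ) * (z1 + z2) + t = t + (l:ℂ) * z1 + (l:ℂ) * z2 from by ring] at this
    have hD' : det2 ((l:ℂ) * z1) ((l:ℂ) * z2) ≠ 0 := by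
      rw [det2_smul_left, det2_smul_right]
      exact mul_ne_zero hlne (mul_ne_zero hlne hD)
    obtain ⟨C1, C2, hC1, hC2, hne, hxr1, hxr2⟩ := parMain Λ t ((l:ℂ) * z1) ((l:ℂ) * z2) u v
      hD' ⟨l * s1, by rw [hs1]; push_cast; ring⟩ ⟨l * s2, by rw [hs2]; push_cast; ring⟩
      m1 m2 m3 m4
    refine ⟨C1, C2, hC1, hC2, hne, fun u' hu' => ?_⟩
    rw [hU] at hu'
    rcases Finset.mem_insert.mp hu' with rfl | hu''
    · exact hxr1
    · rw [Finset.mem_singleton.mp hu'']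
      exact hxr2
  · -- card 3
    obtain ⟨u, v, w, huv, huw, hvw, hU⟩ := Finset.card_eq_three.mp h3
    obtain ⟨-, z1, hz1d, hz10, s1, hs1⟩ := hdir u (by simp [hU])
    obtain ⟨-, z2, hz2d, hz20, s2, hs2⟩ := hdir v (by simp [hU])
    obtain ⟨-, z3, hz3d, hz30, s3, hs3⟩ := hdir w (by simp [hU])
    have hnp12 : ¬ Par u v := hpar u (by simp [hU]) v (by simp [hU]) huv
    have hnp13 : ¬ Par u w := hpar u (by simp [hU]) w (by simp [hU]) huw
    have hnp23 : ¬ Par v w := hpar v (by simp [hU]) w (by simp [hU]) hvw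
    have h12 : det2 z1 z2 ≠ 0 := det2_ne_of_dirs hz10 hz20 ⟨s1, hs1⟩ ⟨s2, hs2⟩ hnp12
    have h13 : det2 z1 z3 ≠ 0 := det2_ne_of_dirs hz10 hz30 ⟨s1, hs1⟩ ⟨s3, hs3⟩ hnp13
    have h23 : det2 z2 z3 ≠ 0 := det2_ne_of_dirs hz20 hz30 ⟨s2, hs2⟩ ⟨s3, hs3⟩ hnp23
    have hPne : det2 z1 z2 * det2 z1 z3 * det2 z2 z3 ≠ 0 :=
      mul_ne_zero (mul_ne_zero h12 h13) h23
    rcases hPne.lt_or_gt with hP | hP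
    · -- negative product: swap roles of u and v
      have h12' : det2 z2 z1 ≠ 0 := by
        rw [det2_comm z1 z2]; exact neg_ne_zero.mpr h12
      have hP' : 0 < det2 z2 z1 * det2 z2 z3 * det2 z1 z3 := by
        rw [det2_comm z1 z2]; nlinarith [hP]
      obtain ⟨C1, C2, hC1, hC2, hne, hxr2, hxr1, hxr3⟩ := hexCase Λ hom v u w z2 z1 z3
        hz2d hz1d hz3d ⟨s2, hs2⟩ ⟨s1, hs1⟩ ⟨s3, hs3⟩ h12' h23 h13 hP'
      refine ⟨C1, C2, hC1, hC2, hne, fun u' hu' => ?_⟩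
      rw [hU] at hu'
      rcases Finset.mem_insert.mp hu' with rfl | hu''
      · exact hxr1
      rcases Finset.mem_insert.mp hu'' with rfl | hu'''
      · exact hxr2
      · rw [Finset.mem_singleton.mp hu''']
        exact hxr3
    · obtain ⟨C1, C2, hC1, hC2, hne, hxr1, hxr2, hxr3⟩ := hexCase Λ hom u v w z1 z2 z3
        hz1d hz2d hz3d ⟨s1, hs1⟩ ⟨s2, hs2⟩ ⟨s3, hs3⟩ h12 h13 h23 hP
      refine ⟨C1, C2, hC1, hC2, hne, fun u' hu' => ?_⟩
      rw [hU] at hu'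
      rcases Finset.mem_insert.mp hu' with rfl | hu''
      · exact hxr1
      rcases Finset.mem_insert.mp hu'' with rfl | hu'''
      · exact hxr2
      · rw [Finset.mem_singleton.mp hu''']
        exact hxr3
end
end

section
/- Let n ≥ 3 and let Λ ⊆ ℂ be an n-cyclotomic Delone set. Then the cross ratio of the slopes of any four pairwise nonparallel Λ-directions is an element of the field ℚ(ζ_n) ∩ ℝ. -/
open Complex Set

noncomputable section

lemma det2_mul_left (r : ℝ) (u w : ℂ) : det2 ((r : ℂ) * u) w = r * det2 u w := by
  simp [det2]; ring

lemma det2_mul_right (r : ℝ) (u w : ℂ) : det2 u ((r : ℂ) * w) = r * det2 u w := by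
  simp [det2]; ring

lemma det2_complex (z w : ℂ) :
    ((det2 z w : ℝ) : ℂ) = ((starRingEnd ℂ) z * w - z * (starRingEnd ℂ) w) / (2 * I) := by
  rw [eq_div_iff (by simp [Complex.ext_iff] : (2 : ℂ) * I ≠ 0)]
  apply Complex.ext <;>
    simp [det2, Complex.mul_re, Complex.mul_im] <;> ring

lemma crossRatioSl_scale (r₁ r₂ r₃ r₄ : ℝ) (hr₁ : r₁ ≠ 0) (hr₂ : r₂ ≠ 0)
    (hr₃ : r₃ ≠ 0) (hr₄ : r₄ ≠ 0) (u₁ u₂ u₃ u₄ : ℂ) :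
    crossRatioSl ((r₁ : ℂ) * u₁) ((r₂ : ℂ) * u₂) ((r₃ : ℂ) * u₃) ((r₄ : ℂ) * u₄)
      = crossRatioSl u₁ u₂ u₃ u₄ := by
  unfold crossRatioSl
  rw [det2_mul_left, det2_mul_right, det2_mul_left, det2_mul_right,
    det2_mul_left, det2_mul_right, det2_mul_left, det2_mul_right]
  rw [show r₁ * (r₃ * det2 u₁ u₃) * (r₂ * (r₄ * det2 u₂ u₄))
      = (r₁ * r₂ * r₃ * r₄) * (det2 u₁ u₃ * det2 u₂ u₄) by ring,
    show r₂ * (r₃ * det2 u₂ u₃) * (r₁ * (r₄ * det2 u₁ u₄))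
      = (r₁ * r₂ * r₃ * r₄) * (det2 u₂ u₃ * det2 u₁ u₄) by ring,
    mul_div_mul_left _ _ (mul_ne_zero (mul_ne_zero (mul_ne_zero hr₁ hr₂) hr₃) hr₄)]

/-- Let `n ≥ 3` and `Λ` an `n`-cyclotomic Delone set. Then the cross ratio
of the slopes of any four pairwise nonparallel `Λ`-directions is an element of the field
`ℚ(ζ_n) ∩ ℝ`. -/
theorem stmt18 (n : ℕ) (hn : 3 ≤ n) (Λ : Set ℂ) (hΛ : IsCycDelone n Λ)
    (u₁ u₂ u₃ u₄ : ℂ)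
    (h₁ : IsDir Λ u₁) (h₂ : IsDir Λ u₂) (h₃ : IsDir Λ u₃) (h₄ : IsDir Λ u₄)
    (h₁₂ : ¬ Par u₁ u₂) (h₁₃ : ¬ Par u₁ u₃) (h₁₄ : ¬ Par u₁ u₄)
    (h₂₃ : ¬ Par u₂ u₃) (h₂₄ : ¬ Par u₂ u₄) (h₃₄ : ¬ Par u₃ u₄) :
    ((crossRatioSl u₁ u₂ u₃ u₄ : ℝ) : ℂ) ∈ cycField n := by
  obtain ⟨-, ⟨z₁, hz₁, hz₁0, r₁, hr₁⟩⟩ := h₁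
  obtain ⟨-, ⟨z₂, hz₂, hz₂0, r₂, hr₂⟩⟩ := h₂
  obtain ⟨-, ⟨z₃, hz₃, hz₃0, r₃, hr₃⟩⟩ := h₃
  obtain ⟨-, ⟨z₄, hz₄, hz₄0, r₄, hr₄⟩⟩ := h₄
  have hr₁0 : r₁ ≠ 0 := fun h => hz₁0 (by simp [hr₁, h])
  have hr₂0 : r₂ ≠ 0 := fun h => hz₂0 (by simp [hr₂, h])
  have hr₃0 : r₃ ≠ 0 := fun h => hz₃0 (by simp [hr₃, h])
  have hr₄0 : r₄ ≠ 0 := fun h => hz₄0 (by simp [hr₄, h])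
  have key : crossRatioSl u₁ u₂ u₃ u₄ = crossRatioSl z₁ z₂ z₃ z₄ := by
    rw [hr₁, hr₂, hr₃, hr₄, crossRatioSl_scale r₁ r₂ r₃ r₄ hr₁0 hr₂0 hr₃0 hr₄0]
  -- membership of the zᵢ and their conjugates in the cyclotomic field
  have hK := hΛ.2.1
  have mem : ∀ z ∈ diffSet Λ, (z ∈ cycField n) ∧ ((starRingEnd ℂ) z ∈ cycField n) := by
    intro z hz
    exact ⟨hK (Subfield.subset_closure (Or.inl hz)),
      hK (Subfield.subset_closure (Or.inr ⟨z, hz, rfl⟩))⟩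
  obtain ⟨m₁, c₁⟩ := mem z₁ hz₁
  obtain ⟨m₂, c₂⟩ := mem z₂ hz₂
  obtain ⟨m₃, c₃⟩ := mem z₃ hz₃
  obtain ⟨m₄, c₄⟩ := mem z₄ hz₄
  have d : ∀ z w : ℂ, z ∈ cycField n → (starRingEnd ℂ) z ∈ cycField n →
      w ∈ cycField n → (starRingEnd ℂ) w ∈ cycField n →
      ((starRingEnd ℂ) z * w - z * (starRingEnd ℂ) w) ∈ cycField n := by
    intro z w a b c e
    exact Subfield.sub_mem _ (Subfield.mul_mem _ b c) (Subfield.mul_mem _ a e)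
  have expand : ((crossRatioSl z₁ z₂ z₃ z₄ : ℝ) : ℂ)
      = (((starRingEnd ℂ) z₁ * z₃ - z₁ * (starRingEnd ℂ) z₃) *
          ((starRingEnd ℂ) z₂ * z₄ - z₂ * (starRingEnd ℂ) z₄)) /
        (((starRingEnd ℂ) z₂ * z₃ - z₂ * (starRingEnd ℂ) z₃) *
          ((starRingEnd ℂ) z₁ * z₄ - z₁ * (starRingEnd ℂ) z₄)) := by
    unfold crossRatioSl
    push_cast
    rw [det2_complex, det2_complex, det2_complex, det2_complex]
    rw [div_mul_div_comm, div_mul_div_comm, div_div_div_eq]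
    rw [mul_comm (((starRingEnd ℂ) z₁ * z₃ - z₁ * (starRingEnd ℂ) z₃) *
          ((starRingEnd ℂ) z₂ * z₄ - z₂ * (starRingEnd ℂ) z₄)) (2 * I * (2 * I)),
      mul_div_mul_left _ _ (by simp [Complex.ext_iff] : (2:ℂ) * I * (2 * I) ≠ 0)]
  rw [key, expand]
  exact Subfield.div_mem _
    (Subfield.mul_mem _ (d _ _ m₁ c₁ m₃ c₃) (d _ _ m₂ c₂ m₄ c₄))
    (Subfield.mul_mem _ (d _ _ m₂ c₂ m₃ c₃) (d _ _ m₁ c₁ m₄ c₄))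
end
end
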